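/- Let D, D' ∈ H⁴ satisfy Jₖ(D) = Jₖ(D') for k = 2, 3, 4, 5, and suppose one of the following four cases holds: (i) there exist g, g' ∈ SO(3) and δ, δ' ∈ ℝ with g·D = NF_cubic(δ) and g'·D' = NF_cubic(δ'), and J₂(D) ≠ 0 and J₂(D') ≠ 0; (ii) the same with NF_TI in place of NF_cubic, with J₂(D) ≠ 0 and J₂(D') ≠ 0; (iii) there exist g, g' ∈ SO(3) and δ, σ, δ', σ' ∈ ℝ with g·D = NF_trig(δ, σ) and g'·D' = NF_trig(δ', σ'), and both D and D' satisfy 3J₄ − J₂² ≠ 0 and 98J₄ − 41J₂² ≠ 0; (iv) the same with NF_tetra in place of NF_trig, where both D and D' satisfy 3J₄ − J₂² ≠ 0 and 5J₂³ − 8J₂J₄ − 70J₃² ≠ 0. Then D and D' lie on the same SO(3)-orbit: there exists h ∈ SO(3) with D' = h·D. (The invariants J₂, …, J₅ separate the orbits inside the cubic, transversely isotropic, trigonal and tetragonal classes.) -/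

import Mathlib

open Matrix BigOperators

abbrev Mat3 := Matrix (Fin 3) (Fin 3) ℝ
abbrev T4 := Fin 3 → Fin 3 → Fin 3 → Fin 3 → ℝ

/-- `g ∈ SO(3)`: real orthogonal 3×3 matrix of determinant 1. -/
def IsSO3 (g : Mat3) : Prop := g * gᵀ = 1 ∧ g.det = 1

/-- A harmonic fourth-order tensor: totally symmetric and traceless. -/
def IsHarm (D : T4) : Prop :=
  (∀ i j k l, D i j k l = D j i k l) ∧
  (∀ i j k l, D i j k l = D i k j l) ∧
  (∀ i j k l, D i j k l = D i j l k) ∧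
  (∀ i j, ∑ k, D k k i j = 0)

/-- The action of a rotation `g` on a fourth-order tensor. -/
noncomputable def act (g : Mat3) (D : T4) : T4 := fun i j k l =>
  ∑ p, ∑ q, ∑ r, ∑ s, g i p * g j q * g k r * g l s * D p q r s

/-- `D²`, the square of a fourth-order tensor. -/
noncomputable def sqT (D : T4) : T4 := fun i j k l => ∑ p, ∑ q, D i j p q * D p q k l

/-- `D³`, the cube of a fourth-order tensor. -/
noncomputable def cbT (D : T4) : T4 := fun i j k l => ∑ p, ∑ q, sqT D i j p q * D p q k l

/-- The second-order Boehler covariant `d₂(D) j l = ∑ᵢ (D²) i j i l`. -/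
noncomputable def d2 (D : T4) : Mat3 := Matrix.of fun j l => ∑ i, sqT D i j i l

/-- The second-order covariant `d₃(D) j l = ∑ᵢ (D³) i j i l`. -/
noncomputable def d3 (D : T4) : Mat3 := Matrix.of fun j l => ∑ i, cbT D i j i l

/-- Fundamental invariant `J₂ = tr d₂`. -/
noncomputable def J2 (D : T4) : ℝ := (d2 D).trace
/-- Fundamental invariant `J₃ = tr d₃`. -/
noncomputable def J3 (D : T4) : ℝ := (d3 D).trace
/-- Fundamental invariant `J₄ = tr(d₂²)`. -/
noncomputable def J4 (D : T4) : ℝ := (d2 D * d2 D).trace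
/-- Fundamental invariant `J₅ = ∑ (d₂)ᵢⱼ D i j k l (d₂)ₖₗ`. -/
noncomputable def J5 (D : T4) : ℝ :=
  ∑ i, ∑ j, ∑ k, ∑ l, d2 D i j * D i j k l * d2 D k l
/-- Fundamental invariant `J₆ = tr(d₂³)`. -/
noncomputable def J6 (D : T4) : ℝ := (d2 D * d2 D * d2 D).trace
/-- Fundamental invariant `J₇ = ∑ (d₂²)ᵢⱼ D i j k l (d₂)ₖₗ`. -/
noncomputable def J7 (D : T4) : ℝ :=
  ∑ i, ∑ j, ∑ k, ∑ l, (d2 D * d2 D) i j * D i j k l * d2 D k l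
/-- Fundamental invariant `J₈ = ∑ (d₂²)ᵢⱼ (D²) i j k l (d₂)ₖₗ`. -/
noncomputable def J8 (D : T4) : ℝ :=
  ∑ i, ∑ j, ∑ k, ∑ l, (d2 D * d2 D) i j * sqT D i j k l * d2 D k l
/-- Fundamental invariant `J₉ = ∑ (d₂²)ᵢⱼ D i j k l (d₂²)ₖₗ`. -/
noncomputable def J9 (D : T4) : ℝ :=
  ∑ i, ∑ j, ∑ k, ∑ l, (d2 D * d2 D) i j * D i j k l * (d2 D * d2 D) k l
/-- Fundamental invariant `J₁₀ = ∑ (d₂²)ᵢⱼ (D²) i j k l (d₂²)ₖₗ`. -/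
noncomputable def J10 (D : T4) : ℝ :=
  ∑ i, ∑ j, ∑ k, ∑ l, (d2 D * d2 D) i j * sqT D i j k l * (d2 D * d2 D) k l

/-- The totally symmetric tensor whose value at `(i,j,k,l)` depends only on the
multiset of indices `{i,j,k,l}`. -/
noncomputable def symT (f : Multiset (Fin 3) → ℝ) : T4 := fun i j k l => f {i, j, k, l}

/-- Normal form of a cubic (`[𝕆]`) tensor in `H⁴` with parameter `δ`
(indices `0,1,2` correspond to `1,2,3`). -/
noncomputable def NFcubic (δ : ℝ) : T4 := symT fun m =>
  if m = {0, 0, 0, 0} ∨ m = {1, 1, 1, 1} ∨ m = {2, 2, 2, 2} then 8 * δ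
  else if m = {0, 0, 1, 1} ∨ m = {0, 0, 2, 2} ∨ m = {1, 1, 2, 2} then -(4 * δ)
  else 0

/-- Normal form of a transversely isotropic (`[O(2)]`) tensor in `H⁴` with parameter `δ`. -/
noncomputable def NFti (δ : ℝ) : T4 := symT fun m =>
  if m = {0, 0, 0, 0} ∨ m = {1, 1, 1, 1} then 3 * δ
  else if m = {2, 2, 2, 2} then 8 * δ
  else if m = {0, 0, 1, 1} then δ
  else if m = {0, 0, 2, 2} ∨ m = {1, 1, 2, 2} then -(4 * δ)
  else 0

/-- Normal form of a trigonal (`[𝔻₃]`) tensor in `H⁴` with parameters `δ, σ`. -/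
noncomputable def NFtrig (δ σ : ℝ) : T4 := symT fun m =>
  if m = {0, 0, 0, 0} ∨ m = {1, 1, 1, 1} then 3 * δ
  else if m = {2, 2, 2, 2} then 8 * δ
  else if m = {0, 0, 1, 1} then δ
  else if m = {0, 0, 2, 2} ∨ m = {1, 1, 2, 2} then -(4 * δ)
  else if m = {0, 0, 1, 2} then -σ
  else if m = {1, 1, 1, 2} then σ
  else 0

/-- Normal form of a tetragonal (`[𝔻₄]`) tensor in `H⁴` with parameters `δ, σ`. -/
noncomputable def NFtetra (δ σ : ℝ) : T4 := symT fun m =>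
  if m = {0, 0, 0, 0} ∨ m = {1, 1, 1, 1} then 3 * δ - σ
  else if m = {2, 2, 2, 2} then 8 * δ
  else if m = {0, 0, 1, 1} then δ + σ
  else if m = {0, 0, 2, 2} ∨ m = {1, 1, 2, 2} then -(4 * δ)
  else 0

/-- Normal form of an orthotropic (`[𝔻₂]`) tensor in `H⁴` with parameters `λ₁, λ₂, λ₃`. -/
noncomputable def NForth (l1 l2 l3 : ℝ) : T4 := symT fun m =>
  if m = {0, 0, 0, 0} then -l2 - l3
  else if m = {1, 1, 1, 1} then -l1 - l3
  else if m = {2, 2, 2, 2} then -l1 - l2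
  else if m = {0, 0, 1, 1} then l3
  else if m = {0, 0, 2, 2} then l2
  else if m = {1, 1, 2, 2} then l1
  else 0

open scoped Kronecker

/-!
Flattening a fourth-order tensor to a 9×9 matrix turns the action of `g` into conjugation
by `g ⊗ g`, the products `D²`, `D³` into matrix powers and `d₂`, `d₃` into partial traces,
so `d₂`, `d₃` transform by conjugation under `SO(3)` and `J₂, …, J₅` are invariants.
It therefore suffices to separate the normal forms. On the cubic and transversely isotropic
ones `J₃` is `1920 δ³`, resp. `720 δ³`, which determines `δ`. On the trigonal and tetragonal
ones `J₅ = 4 δ (3 J₄ - J₂²)`, which determines `δ` as long as `3 J₄ ≠ J₂²`; then `J₂`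
determines `σ²`, and `σ ↦ -σ` is realised by the rotation by `π` about the second axis,
resp. by `π/4` about the third axis.
-/

section MatrixLemmas

variable {R n m : Type*} [CommRing R] [Fintype n]

def partialTrace (A : Matrix (n × m) (n × m) R) : Matrix m m R :=
  of fun j l => ∑ i, A (i, j) (i, l)

theorem partialTrace_kronecker_conj [DecidableEq n] [Fintype m] {g : Matrix n n R}
    (hg : gᵀ * g = 1) (h : Matrix m m R) (A : Matrix (n × m) (n × m) R) :
    partialTrace ((g ⊗ₖ h) * A * (g ⊗ₖ h)ᵀ) = h * partialTrace A * hᵀ := by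
  have hg' : ∀ a c, ∑ i, g i a * g i c = if a = c then 1 else 0 := fun a c => by
    simpa [mul_apply, one_apply] using congrFun (congrFun hg a) c
  ext j l
  simp only [partialTrace, of_apply, mul_apply, transpose_apply, kroneckerMap_apply,
    Fintype.sum_prod_type, Finset.sum_mul, Finset.mul_sum]
  calc _ = ∑ c, ∑ d, ∑ a,
        (∑ i, g i a * g i c) * ∑ b, h j b * A (a, b) (c, d) * h l d := by
        rw [Finset.sum_comm]; refine Finset.sum_congr rfl fun c _ => ?_
        rw [Finset.sum_comm]; refine Finset.sum_congr rfl fun d _ => ?_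
        rw [Finset.sum_comm]; refine Finset.sum_congr rfl fun a _ => ?_
        rw [Finset.sum_mul_sum]
        exact Finset.sum_congr rfl fun i _ => Finset.sum_congr rfl fun b _ => by ring
    _ = _ := by
        simp only [hg', ite_mul, one_mul, zero_mul, Finset.sum_ite_eq', Finset.mem_univ, if_true]
        rw [Finset.sum_comm]; exact Finset.sum_congr rfl fun d _ => Finset.sum_comm

theorem conj_mul_conj [DecidableEq n] {K : Matrix n n R} (hK : Kᵀ * K = 1)
    (A B : Matrix n n R) : (K * A * Kᵀ) * (K * B * Kᵀ) = K * (A * B) * Kᵀ := by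
  simp only [Matrix.mul_assoc, ← Matrix.mul_assoc Kᵀ K, hK, Matrix.one_mul]

theorem trace_conj [DecidableEq n] {K : Matrix n n R} (hK : Kᵀ * K = 1) (A : Matrix n n R) :
    (K * A * Kᵀ).trace = A.trace := by
  rw [trace_mul_cycle, hK, Matrix.one_mul]

theorem dotProduct_conj_mulVec [DecidableEq n] {K : Matrix n n R} (hK : Kᵀ * K = 1)
    (M : Matrix n n R) (v : n → R) :
    K *ᵥ v ⬝ᵥ (K * M * Kᵀ) *ᵥ (K *ᵥ v) = v ⬝ᵥ M *ᵥ v := by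
  rw [mulVec_mulVec, Matrix.mul_assoc, Matrix.mul_assoc, hK, Matrix.mul_one, ← mulVec_mulVec,
    dotProduct_mulVec, ← vecMul_transpose, vecMul_vecMul, hK, vecMul_one]

theorem transpose_mul_self_kronecker [DecidableEq n] {g : Matrix n n R} (hg : gᵀ * g = 1) :
    (g ⊗ₖ g)ᵀ * (g ⊗ₖ g) = 1 := by
  rw [← kroneckerMap_transpose, ← mul_kronecker_mul, hg, one_kronecker_one]

end MatrixLemmas

def flat (D : T4) : Matrix (Fin 3 × Fin 3) (Fin 3 × Fin 3) ℝ := of fun x y => D x.1 x.2 y.1 y.2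

theorem flat_injective : Function.Injective flat := fun _ _ h =>
  funext fun i => funext fun j => funext fun k => funext fun l =>
    congrFun (congrFun h (i, j)) (k, l)

theorem flat_sqT (D : T4) : flat (sqT D) = flat D * flat D := by
  ext ⟨i, j⟩ ⟨k, l⟩
  simp [flat, sqT, mul_apply, Fintype.sum_prod_type]

theorem flat_cbT (D : T4) : flat (cbT D) = flat D * flat D * flat D := by
  rw [← flat_sqT]
  ext ⟨i, j⟩ ⟨k, l⟩
  simp [flat, cbT, mul_apply, Fintype.sum_prod_type]

theorem flat_act (g : Mat3) (D : T4) :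
    flat (act g D) = (g ⊗ₖ g) * flat D * (g ⊗ₖ g)ᵀ := by
  ext ⟨i, j⟩ ⟨k, l⟩
  simp only [flat, act, of_apply, mul_apply, transpose_apply, kroneckerMap_apply, Finset.sum_mul]
  conv_rhs => rw [Finset.sum_comm]
  simp only [Fintype.sum_prod_type]
  refine Finset.sum_congr rfl fun p _ => Finset.sum_congr rfl fun q _ =>
    Finset.sum_congr rfl fun r _ => Finset.sum_congr rfl fun s _ => by ring

theorem act_mul (g h : Mat3) (D : T4) : act (g * h) D = act g (act h D) :=
  flat_injective <| by
    simp only [flat_act, mul_kronecker_mul, transpose_mul, Matrix.mul_assoc]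

theorem act_one (D : T4) : act 1 D = D :=
  flat_injective <| by simp [flat_act]

theorem d2_eq_partialTrace (D : T4) : d2 D = partialTrace (flat (sqT D)) := rfl

theorem d3_eq_partialTrace (D : T4) : d3 D = partialTrace (flat (cbT D)) := rfl

section Equivariance

variable {g : Mat3}

theorem sqT_act (hg : gᵀ * g = 1) (D : T4) : sqT (act g D) = act g (sqT D) :=
  flat_injective <| by
    rw [flat_sqT, flat_act, flat_act, flat_sqT, conj_mul_conj (transpose_mul_self_kronecker hg)]

theorem cbT_act (hg : gᵀ * g = 1) (D : T4) : cbT (act g D) = act g (cbT D) :=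
  flat_injective <| by
    simp only [flat_cbT, flat_act, conj_mul_conj (transpose_mul_self_kronecker hg)]

theorem d2_act (hg : gᵀ * g = 1) (D : T4) : d2 (act g D) = g * d2 D * gᵀ := by
  rw [d2_eq_partialTrace, d2_eq_partialTrace, sqT_act hg, flat_act,
    partialTrace_kronecker_conj hg]

theorem d3_act (hg : gᵀ * g = 1) (D : T4) : d3 (act g D) = g * d3 D * gᵀ := by
  rw [d3_eq_partialTrace, d3_eq_partialTrace, cbT_act hg, flat_act,
    partialTrace_kronecker_conj hg]

theorem J2_act (hg : gᵀ * g = 1) (D : T4) : J2 (act g D) = J2 D := by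
  rw [J2, d2_act hg, trace_conj hg, J2]

theorem J3_act (hg : gᵀ * g = 1) (D : T4) : J3 (act g D) = J3 D := by
  rw [J3, d3_act hg, trace_conj hg, J3]

theorem J4_act (hg : gᵀ * g = 1) (D : T4) : J4 (act g D) = J4 D := by
  rw [J4, d2_act hg, conj_mul_conj hg, trace_conj hg, J4]

theorem J5_eq_dotProduct (D : T4) : J5 D = vec (d2 D)ᵀ ⬝ᵥ flat D *ᵥ vec (d2 D)ᵀ := by
  simp only [J5, vec, flat, dotProduct, mulVec, Fintype.sum_prod_type, Finset.mul_sum,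
    transpose_apply, of_apply, mul_assoc]

theorem J5_act (hg : gᵀ * g = 1) (D : T4) : J5 (act g D) = J5 D := by
  have hconj : (g * d2 D * gᵀ)ᵀ = g * (d2 D)ᵀ * gᵀ := by
    simp only [transpose_mul, transpose_transpose, Matrix.mul_assoc]
  rw [J5_eq_dotProduct, J5_eq_dotProduct, d2_act hg, hconj, ← kronecker_mulVec_vec, flat_act,
    dotProduct_conj_mulVec (transpose_mul_self_kronecker hg)]

end Equivariance

theorem IsSO3.transpose_mul_self {g : Mat3} (hg : IsSO3 g) : gᵀ * g = 1 :=
  mul_eq_one_comm.mp hg.1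

theorem IsSO3.mul {g h : Mat3} (hg : IsSO3 g) (hh : IsSO3 h) : IsSO3 (g * h) := by
  refine ⟨?_, by rw [det_mul, hg.2, hh.2, one_mul]⟩
  rw [transpose_mul, Matrix.mul_assoc, ← Matrix.mul_assoc h, hh.1, Matrix.one_mul, hg.1]

theorem IsSO3.transpose {g : Mat3} (hg : IsSO3 g) : IsSO3 gᵀ :=
  ⟨by rw [transpose_transpose, hg.transpose_mul_self], by rw [det_transpose, hg.2]⟩

def SO3Related (D D' : T4) : Prop := ∃ h : Mat3, IsSO3 h ∧ D' = act h D

namespace SO3Related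

variable {D D' D'' : T4}

theorem of_act_eq {g : Mat3} (hg : IsSO3 g) (h : act g D = D') : SO3Related D D' :=
  ⟨g, hg, h.symm⟩

theorem symm : SO3Related D D' → SO3Related D' D := fun ⟨g, hg, h⟩ =>
  ⟨gᵀ, hg.transpose, by rw [h, ← act_mul, hg.transpose_mul_self, act_one]⟩

theorem trans : SO3Related D D' → SO3Related D' D'' → SO3Related D D'' :=
  fun ⟨g, hg, h⟩ ⟨g', hg', h'⟩ => ⟨g' * g, hg'.mul hg, by rw [h', h, act_mul]⟩

theorem J2_eq : SO3Related D D' → J2 D = J2 D' := fun ⟨_, hg, h⟩ =>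
  h ▸ (J2_act hg.transpose_mul_self D).symm

theorem J3_eq : SO3Related D D' → J3 D = J3 D' := fun ⟨_, hg, h⟩ =>
  h ▸ (J3_act hg.transpose_mul_self D).symm

theorem J4_eq : SO3Related D D' → J4 D = J4 D' := fun ⟨_, hg, h⟩ =>
  h ▸ (J4_act hg.transpose_mul_self D).symm

theorem J5_eq : SO3Related D D' → J5 D = J5 D' := fun ⟨_, hg, h⟩ =>
  h ▸ (J5_act hg.transpose_mul_self D).symm

end SO3Related

theorem NFtrig_eq_table (δ σ : ℝ) : NFtrig δ σ =
    ![![![![3 * δ, 0, 0], ![0, δ, -σ], ![0, -σ, -(4 * δ)]],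
        ![![0, δ, -σ], ![δ, 0, 0], ![-σ, 0, 0]],
        ![![0, -σ, -(4 * δ)], ![-σ, 0, 0], ![-(4 * δ), 0, 0]]],
      ![![![0, δ, -σ], ![δ, 0, 0], ![-σ, 0, 0]],
        ![![δ, 0, 0], ![0, 3 * δ, σ], ![0, σ, -(4 * δ)]],
        ![![-σ, 0, 0], ![0, σ, -(4 * δ)], ![0, -(4 * δ), 0]]],
      ![![![0, -σ, -(4 * δ)], ![-σ, 0, 0], ![-(4 * δ), 0, 0]],
        ![![-σ, 0, 0], ![0, σ, -(4 * δ)], ![0, -(4 * δ), 0]],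
        ![![-(4 * δ), 0, 0], ![0, -(4 * δ), 0], ![0, 0, 8 * δ]]]] := by
  funext i j k l
  fin_cases i <;> fin_cases j <;> fin_cases k <;> fin_cases l <;>
    simp +decide [NFtrig, symT]

theorem NFtetra_eq_table (δ σ : ℝ) : NFtetra δ σ =
    ![![![![3 * δ - σ, 0, 0], ![0, δ + σ, 0], ![0, 0, -(4 * δ)]],
        ![![0, δ + σ, 0], ![δ + σ, 0, 0], ![0, 0, 0]],
        ![![0, 0, -(4 * δ)], ![0, 0, 0], ![-(4 * δ), 0, 0]]],
      ![![![0, δ + σ, 0], ![δ + σ, 0, 0], ![0, 0, 0]],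
        ![![δ + σ, 0, 0], ![0, 3 * δ - σ, 0], ![0, 0, -(4 * δ)]],
        ![![0, 0, 0], ![0, 0, -(4 * δ)], ![0, -(4 * δ), 0]]],
      ![![![0, 0, -(4 * δ)], ![0, 0, 0], ![-(4 * δ), 0, 0]],
        ![![0, 0, 0], ![0, 0, -(4 * δ)], ![0, -(4 * δ), 0]],
        ![![-(4 * δ), 0, 0], ![0, -(4 * δ), 0], ![0, 0, 8 * δ]]]] := by
  funext i j k l
  fin_cases i <;> fin_cases j <;> fin_cases k <;> fin_cases l <;>
    simp +decide [NFtetra, symT]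

theorem NFti_eq_NFtetra (δ : ℝ) : NFti δ = NFtetra δ 0 := by
  simp only [NFti, NFtetra, sub_zero, add_zero]

theorem NFcubic_eq_NFtetra (δ : ℝ) : NFcubic δ = NFtetra δ (-5 * δ) := by
  unfold NFcubic NFtetra
  congr 1; funext m
  split_ifs <;> simp_all +decide <;> ring

section NormalFormInvariants

variable (δ σ : ℝ)

theorem d2_NFtrig : d2 (NFtrig δ σ) =
    !![60 * δ ^ 2 + 6 * σ ^ 2, 0, 0;
       0, 60 * δ ^ 2 + 6 * σ ^ 2, 0;
       0, 0, 160 * δ ^ 2 + 4 * σ ^ 2] := by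
  ext j l
  fin_cases j <;> fin_cases l <;>
    simp [d2, sqT, Fin.sum_univ_three, NFtrig_eq_table] <;> ring

theorem d2_NFtetra : d2 (NFtetra δ σ) =
    !![60 * δ ^ 2 + 4 * σ ^ 2, 0, 0;
       0, 60 * δ ^ 2 + 4 * σ ^ 2, 0;
       0, 0, 160 * δ ^ 2] := by
  ext j l
  fin_cases j <;> fin_cases l <;>
    simp [d2, sqT, Fin.sum_univ_three, NFtetra_eq_table] <;> ring

theorem J2_NFtrig : J2 (NFtrig δ σ) = 280 * δ ^ 2 + 16 * σ ^ 2 := by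
  simp [J2, d2_NFtrig, trace_fin_three]; ring

theorem J2_NFtetra : J2 (NFtetra δ σ) = 280 * δ ^ 2 + 8 * σ ^ 2 := by
  simp [J2, d2_NFtetra, trace_fin_three]; ring

theorem J4_NFtrig : J4 (NFtrig δ σ) = 32800 * δ ^ 4 + 2720 * δ ^ 2 * σ ^ 2 + 88 * σ ^ 4 := by
  simp [J4, d2_NFtrig, trace_fin_three]; ring

theorem J4_NFtetra : J4 (NFtetra δ σ) = 32800 * δ ^ 4 + 960 * δ ^ 2 * σ ^ 2 + 32 * σ ^ 4 := by
  simp [J4, d2_NFtetra, trace_fin_three]; ring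

theorem J5_NFtrig :
    J5 (NFtrig δ σ) = 80000 * δ ^ 5 - 3200 * δ ^ 3 * σ ^ 2 + 32 * δ * σ ^ 4 := by
  rw [J5, d2_NFtrig, NFtrig_eq_table]
  simp [Fin.sum_univ_three]; ring

theorem J5_NFtetra :
    J5 (NFtetra δ σ) = 80000 * δ ^ 5 - 6400 * δ ^ 3 * σ ^ 2 + 128 * δ * σ ^ 4 := by
  rw [J5, d2_NFtetra, NFtetra_eq_table]
  simp [Fin.sum_univ_three]; ring

theorem J3_NFtetra : J3 (NFtetra δ σ) = 720 * δ ^ 3 + 48 * δ * σ ^ 2 := by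
  simp [J3, d3, cbT, sqT, NFtetra_eq_table, trace_fin_three, Fin.sum_univ_three]; ring

end NormalFormInvariants

theorem act_diagonal (v : Fin 3 → ℝ) (D : T4) (i j k l : Fin 3) :
    act (diagonal v) D i j k l = v i * v j * v k * v l * D i j k l := by
  simp [act, diagonal_apply, ite_mul, mul_ite]

theorem isSO3_diagonal_neg_one_one_neg_one : IsSO3 (diagonal ![-1, 1, -1]) := by
  refine ⟨?_, by simp [det_diagonal, Fin.prod_univ_three]⟩
  rw [diagonal_transpose, diagonal_mul_diagonal, ← diagonal_one]
  congr 1; funext i; fin_cases i <;> norm_num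

theorem act_diagonal_NFtrig (δ σ : ℝ) :
    act (diagonal ![-1, 1, -1]) (NFtrig δ σ) = NFtrig δ (-σ) := by
  funext i j k l
  rw [act_diagonal, NFtrig_eq_table, NFtrig_eq_table]
  fin_cases i <;> fin_cases j <;> fin_cases k <;> fin_cases l <;> simp

theorem isSO3_rotation {c : ℝ} (hc : c ^ 2 = 1 / 2) : IsSO3 !![c, -c, 0; c, c, 0; 0, 0, 1] := by
  constructor
  · ext i j
    fin_cases i <;> fin_cases j <;> simp [mul_apply, Fin.sum_univ_three, one_apply] <;>
      linear_combination 2 * hc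
  · simp [det_fin_three]; linear_combination 2 * hc

theorem act_rotation_NFtetra {c : ℝ} (hc : c ^ 2 = 1 / 2) (δ σ : ℝ) :
    act !![c, -c, 0; c, c, 0; 0, 0, 1] (NFtetra δ σ) = NFtetra δ (-σ) := by
  have hc4 : c ^ 4 = 1 / 4 := by rw [show c ^ 4 = (c ^ 2) ^ 2 by ring, hc]; norm_num
  funext i j k l
  rw [NFtetra_eq_table, NFtetra_eq_table]
  fin_cases i <;> fin_cases j <;> fin_cases k <;> fin_cases l <;>
    simp [act, Fin.sum_univ_three] <;> ring_nf <;> simp only [hc, hc4] <;> ring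

theorem J3_NFcubic (δ : ℝ) : J3 (NFcubic δ) = 1920 * δ ^ 3 := by
  rw [NFcubic_eq_NFtetra, J3_NFtetra]; ring

theorem J3_NFti (δ : ℝ) : J3 (NFti δ) = 720 * δ ^ 3 := by
  rw [NFti_eq_NFtetra, J3_NFtetra]; ring

theorem J5_NFtrig_eq (δ σ : ℝ) :
    J5 (NFtrig δ σ) = 4 * δ * (3 * J4 (NFtrig δ σ) - J2 (NFtrig δ σ) ^ 2) := by
  rw [J5_NFtrig, J4_NFtrig, J2_NFtrig]; ring

theorem J5_NFtetra_eq (δ σ : ℝ) :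
    J5 (NFtetra δ σ) = 4 * δ * (3 * J4 (NFtetra δ σ) - J2 (NFtetra δ σ) ^ 2) := by
  rw [J5_NFtetra, J4_NFtetra, J2_NFtetra]; ring

namespace SO3Related

theorem NFtrig_neg (δ σ : ℝ) : SO3Related (NFtrig δ σ) (NFtrig δ (-σ)) :=
  of_act_eq isSO3_diagonal_neg_one_one_neg_one (act_diagonal_NFtrig δ σ)

theorem NFtetra_neg (δ σ : ℝ) : SO3Related (NFtetra δ σ) (NFtetra δ (-σ)) := by
  have hc : (√2 / 2) ^ 2 = 1 / 2 := by rw [div_pow, Real.sq_sqrt zero_le_two]; norm_num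
  exact of_act_eq (isSO3_rotation hc) (act_rotation_NFtetra hc δ σ)

variable {D D' : T4}

theorem of_J3_eq {N : ℝ → T4} {c : ℝ} (hc : c ≠ 0) (hN : ∀ δ, J3 (N δ) = c * δ ^ 3)
    {δ δ' : ℝ} (hD : SO3Related D (N δ)) (hD' : SO3Related D' (N δ'))
    (h3 : J3 D = J3 D') : SO3Related D D' := by
  have hδ : δ = δ' := (Odd.pow_inj (by decide : Odd 3)).mp <| mul_left_cancel₀ hc <| by
    rw [← hN, ← hN, ← hD.J3_eq, ← hD'.J3_eq, h3]
  exact hD.trans (hδ ▸ hD'.symm)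

theorem of_J2_J4_J5_eq {N : ℝ → ℝ → T4} {a b : ℝ} (hb : b ≠ 0)
    (hJ2 : ∀ δ σ, J2 (N δ σ) = a * δ ^ 2 + b * σ ^ 2)
    (hJ5 : ∀ δ σ, J5 (N δ σ) = 4 * δ * (3 * J4 (N δ σ) - J2 (N δ σ) ^ 2))
    (hneg : ∀ δ σ, SO3Related (N δ σ) (N δ (-σ)))
    {δ σ δ' σ' : ℝ} (hD : SO3Related D (N δ σ)) (hD' : SO3Related D' (N δ' σ'))
    (hdisc : 3 * J4 D - J2 D ^ 2 ≠ 0)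
    (h2 : J2 D = J2 D') (h4 : J4 D = J4 D') (h5 : J5 D = J5 D') : SO3Related D D' := by
  rw [hD.J2_eq, hD'.J2_eq] at h2
  rw [hD.J4_eq, hD'.J4_eq] at h4
  rw [hD.J5_eq, hD'.J5_eq] at h5
  rw [hD.J2_eq, hD.J4_eq] at hdisc
  have hδ : δ = δ' := by
    have h := hJ5 δ σ
    rw [h5, hJ5, ← h2, ← h4] at h
    linarith [mul_right_cancel₀ hdisc h]
  subst hδ
  have hσ : σ' ^ 2 = σ ^ 2 := mul_left_cancel₀ hb <| by linarith [hJ2 δ σ, hJ2 δ σ']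
  rcases sq_eq_sq_iff_eq_or_eq_neg.mp hσ with rfl | rfl
  · exact hD.trans hD'.symm
  · exact hD.trans ((hneg δ σ).trans hD'.symm)

end SO3Related

theorem invariants_separate_orbits_high_symmetry_general (D D' : T4)
    (hJ : J2 D = J2 D' ∧ J3 D = J3 D' ∧ J4 D = J4 D' ∧ J5 D = J5 D')
    (hcase :
      ((∃ (g : Mat3) (δ : ℝ), IsSO3 g ∧ act g D = NFcubic δ) ∧
       (∃ (g' : Mat3) (δ' : ℝ), IsSO3 g' ∧ act g' D' = NFcubic δ') ∧
       J2 D ≠ 0 ∧ J2 D' ≠ 0) ∨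
      ((∃ (g : Mat3) (δ : ℝ), IsSO3 g ∧ act g D = NFti δ) ∧
       (∃ (g' : Mat3) (δ' : ℝ), IsSO3 g' ∧ act g' D' = NFti δ') ∧
       J2 D ≠ 0 ∧ J2 D' ≠ 0) ∨
      ((∃ (g : Mat3) (δ σ : ℝ), IsSO3 g ∧ act g D = NFtrig δ σ) ∧
       (∃ (g' : Mat3) (δ' σ' : ℝ), IsSO3 g' ∧ act g' D' = NFtrig δ' σ') ∧
       3 * J4 D - (J2 D) ^ 2 ≠ 0 ∧ 98 * J4 D - 41 * (J2 D) ^ 2 ≠ 0 ∧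
       3 * J4 D' - (J2 D') ^ 2 ≠ 0 ∧ 98 * J4 D' - 41 * (J2 D') ^ 2 ≠ 0) ∨
      ((∃ (g : Mat3) (δ σ : ℝ), IsSO3 g ∧ act g D = NFtetra δ σ) ∧
       (∃ (g' : Mat3) (δ' σ' : ℝ), IsSO3 g' ∧ act g' D' = NFtetra δ' σ') ∧
       3 * J4 D - (J2 D) ^ 2 ≠ 0 ∧
       5 * (J2 D) ^ 3 - 8 * J2 D * J4 D - 70 * (J3 D) ^ 2 ≠ 0 ∧
       3 * J4 D' - (J2 D') ^ 2 ≠ 0 ∧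
       5 * (J2 D') ^ 3 - 8 * J2 D' * J4 D' - 70 * (J3 D') ^ 2 ≠ 0)) :
    ∃ h : Mat3, IsSO3 h ∧ D' = act h D := by
  obtain ⟨hJ2, hJ3, hJ4, hJ5⟩ := hJ
  rcases hcase with
      ⟨⟨g, δ, hg, hN⟩, ⟨g', δ', hg', hN'⟩, -⟩ |
      ⟨⟨g, δ, hg, hN⟩, ⟨g', δ', hg', hN'⟩, -⟩ |
      ⟨⟨g, δ, σ, hg, hN⟩, ⟨g', δ', σ', hg', hN'⟩, hdisc, -⟩ |
      ⟨⟨g, δ, σ, hg, hN⟩, ⟨g', δ', σ', hg', hN'⟩, hdisc, -⟩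
  · exact SO3Related.of_J3_eq (by norm_num) J3_NFcubic (.of_act_eq hg hN) (.of_act_eq hg' hN') hJ3
  · exact SO3Related.of_J3_eq (by norm_num) J3_NFti (.of_act_eq hg hN) (.of_act_eq hg' hN') hJ3
  · exact SO3Related.of_J2_J4_J5_eq (by norm_num) J2_NFtrig J5_NFtrig_eq SO3Related.NFtrig_neg
      (.of_act_eq hg hN) (.of_act_eq hg' hN') hdisc hJ2 hJ4 hJ5
  · exact SO3Related.of_J2_J4_J5_eq (by norm_num) J2_NFtetra J5_NFtetra_eq SO3Related.NFtetra_neg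
      (.of_act_eq hg hN) (.of_act_eq hg' hN') hdisc hJ2 hJ4 hJ5

/-- the invariants `J₂, J₃, J₄, J₅` separate the `SO(3)`-orbits inside each of
the cubic, transversely isotropic, trigonal and tetragonal classes of `H⁴`. -/
theorem invariants_separate_orbits_high_symmetry (D D' : T4)
    (hD : IsHarm D) (hD' : IsHarm D')
    (hJ : J2 D = J2 D' ∧ J3 D = J3 D' ∧ J4 D = J4 D' ∧ J5 D = J5 D')
    (hcase :
      ((∃ (g : Mat3) (δ : ℝ), IsSO3 g ∧ act g D = NFcubic δ) ∧
       (∃ (g' : Mat3) (δ' : ℝ), IsSO3 g' ∧ act g' D' = NFcubic δ') ∧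
       J2 D ≠ 0 ∧ J2 D' ≠ 0) ∨
      ((∃ (g : Mat3) (δ : ℝ), IsSO3 g ∧ act g D = NFti δ) ∧
       (∃ (g' : Mat3) (δ' : ℝ), IsSO3 g' ∧ act g' D' = NFti δ') ∧
       J2 D ≠ 0 ∧ J2 D' ≠ 0) ∨
      ((∃ (g : Mat3) (δ σ : ℝ), IsSO3 g ∧ act g D = NFtrig δ σ) ∧
       (∃ (g' : Mat3) (δ' σ' : ℝ), IsSO3 g' ∧ act g' D' = NFtrig δ' σ') ∧
       3 * J4 D - (J2 D) ^ 2 ≠ 0 ∧ 98 * J4 D - 41 * (J2 D) ^ 2 ≠ 0 ∧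
       3 * J4 D' - (J2 D') ^ 2 ≠ 0 ∧ 98 * J4 D' - 41 * (J2 D') ^ 2 ≠ 0) ∨
      ((∃ (g : Mat3) (δ σ : ℝ), IsSO3 g ∧ act g D = NFtetra δ σ) ∧
       (∃ (g' : Mat3) (δ' σ' : ℝ), IsSO3 g' ∧ act g' D' = NFtetra δ' σ') ∧
       3 * J4 D - (J2 D) ^ 2 ≠ 0 ∧
       5 * (J2 D) ^ 3 - 8 * J2 D * J4 D - 70 * (J3 D) ^ 2 ≠ 0 ∧
       3 * J4 D' - (J2 D') ^ 2 ≠ 0 ∧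
       5 * (J2 D') ^ 3 - 8 * J2 D' * J4 D' - 70 * (J3 D') ^ 2 ≠ 0)) :
    ∃ h : Mat3, IsSO3 h ∧ D' = act h D :=
  invariants_separate_orbits_high_symmetry_general D D' hJ hcase
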